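/- Let $L$ be an $n \times n$ matrix over a field with $L_{kk} = 0$ for a fixed index $k$, such that $I - L$ is invertible. Define the edge-eliminated matrix $L'$ on the index set with $k$ removed by $L'_{ij} = L_{ij} + L_{ik} L_{kj}$ for $i, j \neq k$ (a rank-one update that moves the weights of edges through node $k$ onto direct edges). If $I - L'$ is invertible, then for all $i, j \neq k$, the $(i,j)$ entry of $(I - L')^{-1}$ equals the $(i,j)$ entry of $(I - L)^{-1}$; that is, deleting row and column $k$ from the path weights matrix $(I-L)^{-1}$ gives the path weights matrix of the graph with node $k$ eliminated. -/

import Mathlib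

/-!
Write `N = (1 - L)⁻¹`, so that `L * N = N - 1`. Expanding the product of the eliminated matrix
with the restriction of `N` and splitting off the index `k` from each sum gives
`(L * N) i j + L i k * ((L * N) k j - N k j)`, using `L k k = 0`. For `j ≠ k` the bracket is
`-(1 : Matrix _ _ _) k j = 0`, so the restriction of `N` is a right inverse of `1 - L'`.
-/

namespace Matrix

variable {n R : Type*} [Fintype n] [DecidableEq n]

def eliminateNode [Add R] [Mul R] (L : Matrix n n R) (k : n) : Matrix {i // i ≠ k} {i // i ≠ k} R :=
  fun i j => L i j + L i k * L k j

theorem eliminateNode_mul_submatrix_apply [Ring R] (L N : Matrix n n R) {k : n}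
    (hkk : L k k = 0) (i j : {i // i ≠ k}) :
    (eliminateNode L k * N.submatrix Subtype.val Subtype.val : Matrix {i // i ≠ k} _ R) i j =
      (L * N) i j + L i k * ((L * N) k j - N k j) := by
  simp only [mul_apply, eliminateNode, submatrix_apply, add_mul, mul_assoc,
    Finset.sum_add_distrib, ← Finset.mul_sum]
  rw [Fintype.sum_eq_add_sum_subtype_ne (fun m => L i m * N m j) k,
    Fintype.sum_eq_add_sum_subtype_ne (fun m => L k m * N m j) k, hkk]
  noncomm_ring

theorem inv_one_sub_eliminateNode [CommRing R] (L : Matrix n n R) {k : n} (hkk : L k k = 0)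
    (hL : IsUnit (1 - L)) :
    (1 - eliminateNode L k)⁻¹ = (1 - L)⁻¹.submatrix Subtype.val Subtype.val := by
  set N := (1 - L)⁻¹
  have hLN : L * N = N - 1 := by
    have h : (1 - L) * N = 1 := mul_nonsing_inv _ ((isUnit_iff_isUnit_det _).mp hL)
    rw [sub_mul, one_mul] at h
    rw [← h, sub_sub_cancel]
  refine inv_eq_right_inv (ext fun i j => ?_)
  rw [sub_mul, one_mul, sub_apply, eliminateNode_mul_submatrix_apply L N hkk, hLN]
  simp [one_apply, Subtype.ext_iff, j.2.symm]

end Matrix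

theorem stmt_3_general {F : Type*} [Field F] (n : ℕ)
    (L : Matrix (Fin n) (Fin n) F) (k : Fin n) (hkk : L k k = 0)
    (hL : IsUnit (1 - L))
    (L' : Matrix {i : Fin n // i ≠ k} {i : Fin n // i ≠ k} F)
    (hL'def : ∀ i j : {i : Fin n // i ≠ k}, L' i j = L i.1 j.1 + L i.1 k * L k j.1) :
    ∀ i j : {i : Fin n // i ≠ k}, (1 - L')⁻¹ i j = (1 - L)⁻¹ i.1 j.1 := by
  obtain rfl : L' = Matrix.eliminateNode L k := Matrix.ext hL'def
  intro i j
  rw [Matrix.inv_one_sub_eliminateNode L hkk hL]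
  rfl

/-- Edge elimination: if `L k k = 0`, `I - L` is invertible, and `L'` is the matrix on the
index set with `k` removed given by `L' i j = L i j + L i k * L k j`, with `I - L'`
invertible, then `(I - L')⁻¹ i j = (I - L)⁻¹ i j` for all `i, j ≠ k`. -/
theorem stmt_3 {F : Type*} [Field F] (n : ℕ)
    (L : Matrix (Fin n) (Fin n) F) (k : Fin n) (hkk : L k k = 0)
    (hL : IsUnit (1 - L))
    (L' : Matrix {i : Fin n // i ≠ k} {i : Fin n // i ≠ k} F)
    (hL'def : ∀ i j : {i : Fin n // i ≠ k}, L' i j = L i.1 j.1 + L i.1 k * L k j.1)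
    (hL' : IsUnit (1 - L')) :
    ∀ i j : {i : Fin n // i ≠ k}, (1 - L')⁻¹ i j = (1 - L)⁻¹ i.1 j.1 :=
  stmt_3_general n L k hkk hL L' hL'def
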